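/- arXiv:2106.00519 — 2 statements merged into one kernel-verified Lean document; each statement's English description precedes it below -/
import Mathlib

section
/- Let U ⊆ ℝ^n be open, let f : U → ℝ^n, and let x ∈ U. Suppose that the tangent cone T_{gph f}(x, f(x)) to the graph of f at (x, f(x)) is an n-dimensional linear subspace of ℝ^{2n}, and that f is calm at x, i.e. there exist κ ≥ 0 and δ > 0 with ‖f(x') − f(x)‖ ≤ κ‖x' − x‖ for all x' ∈ U with ‖x' − x‖ ≤ δ. Then f is Fréchet differentiable at x. -/
open Filter Topology Metric Set
open scoped InnerProductSpace RealInnerProductSpace ENNReal NNReal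

noncomputable section

namespace SCD

abbrev E (n : ℕ) := EuclideanSpace ℝ (Fin n)
abbrev E2 (n : ℕ) := WithLp 2 (E n × E n)

variable {n : ℕ}

def lp2 (n : ℕ) : E2 n ≃ₗ[ℝ] E n × E n := WithLp.linearEquiv 2 ℝ (E n × E n)
def mk2 (u v : E n) : E2 n := (lp2 n).symm (u, v)
def fst2 (z : E2 n) : E n := (lp2 n z).1
def snd2 (z : E2 n) : E n := (lp2 n z).2

instance : FiniteDimensional ℝ (E2 n) := Module.Finite.equiv (lp2 n).symm

def tcone {H : Type*} [NormedAddCommGroup H] [NormedSpace ℝ H] (A : Set H) (z : H) : Set H :=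
  {w | ∃ t : ℕ → ℝ, ∃ wk : ℕ → H, (∀ k, 0 < t k) ∧ Tendsto t atTop (𝓝 0) ∧
      Tendsto wk atTop (𝓝 w) ∧ ∀ k, z + t k • wk k ∈ A}

def gph (F : E n → Set (E n)) : Set (E2 n) := {z | snd2 z ∈ F (fst2 z)}
def projC (L : Submodule ℝ (E2 n)) : E2 n →L[ℝ] E2 n := L.subtypeL.comp L.orthogonalProjectionOnto
def dZ (L₁ L₂ : Submodule ℝ (E2 n)) : ℝ := ‖projC L₁ - projC L₂‖

def Sneg (n : ℕ) : E2 n ≃ₗ[ℝ] E2 n :=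
  (lp2 n).trans (((LinearEquiv.prodComm ℝ (E n) (E n)).trans
    ((LinearEquiv.neg ℝ).prodCongr (LinearEquiv.refl ℝ (E n)))).trans (lp2 n).symm)

def adjS (L : Submodule ℝ (E2 n)) : Submodule ℝ (E2 n) := Lᗮ.map (Sneg n).toLinearMap

/-- `O_F`: the set of points of `gph F` where `F` is graphically smooth of dimension `n`,
i.e. the tangent cone to the graph is an `n`-dimensional linear subspace. -/
def OF (F : E n → Set (E n)) : Set (E2 n) :=
  {z | z ∈ gph F ∧ ∃ L : Submodule ℝ (E2 n),
    Module.finrank ℝ L = n ∧ (L : Set (E2 n)) = tcone (gph F) z}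

/-- The primal generalized derivative `Sp F(x,y)`. -/
def Sp (F : E n → Set (E n)) (z : E2 n) : Set (Submodule ℝ (E2 n)) :=
  {L | Module.finrank ℝ L = n ∧ ∃ (zk : ℕ → E2 n) (Lk : ℕ → Submodule ℝ (E2 n)),
      (∀ k, zk k ∈ gph F ∧ Module.finrank ℝ (Lk k) = n ∧
        ((Lk k : Set (E2 n)) = tcone (gph F) (zk k))) ∧
      Tendsto zk atTop (𝓝 z) ∧ Tendsto (fun k => dZ (Lk k) L) atTop (𝓝 0)}

/-- The dual generalized derivative `Sp* F(x,y)`. -/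
def SpStar (F : E n → Set (E n)) (z : E2 n) : Set (Submodule ℝ (E2 n)) :=
  {L' | ∃ L ∈ Sp F z, L' = adjS L}

/-- `F` has the SCD property at `z ∈ gph F`. -/
def SCDAt (F : E n → Set (E n)) (z : E2 n) : Prop := (Sp F z).Nonempty

/-- `F` has the SCD property around `z ∈ gph F`. -/
def SCDAround (F : E n → Set (E n)) (z : E2 n) : Prop :=
  ∃ δ > (0 : ℝ), ∀ z' ∈ gph F, dist z' z < δ → SCDAt F z'

/-- `Z_n^{reg}`: the subspaces `L ∈ Z_n` such that `(y*, 0) ∈ L` implies `y* = 0`. -/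
def Znreg (n : ℕ) : Set (Submodule ℝ (E2 n)) :=
  {L | Module.finrank ℝ L = n ∧ ∀ y : E n, mk2 y 0 ∈ L → y = 0}

/-- `F` is SCD regular around `z ∈ gph F`. -/
def SCDRegularAround (F : E n → Set (E n)) (z : E2 n) : Prop :=
  SCDAround F z ∧ ∀ L ∈ SpStar F z, L ∈ Znreg n

/-- The set of values `‖y*‖` for `(y*, x*)` in some `L ∈ Sp* F(x,y)` with `‖x*‖ ≤ 1`;
its supremum is the modulus of SCD regularity. -/
def scdregSet (F : E n → Set (E n)) (z : E2 n) : Set ℝ :=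
  {r | ∃ L ∈ SpStar F z, ∃ w : E2 n, w ∈ L ∧ ‖snd2 w‖ ≤ 1 ∧ r = ‖fst2 w‖}

/-- The modulus of SCD regularity `scd reg F(x,y)`. -/
def scdreg (F : E n → Set (E n)) (z : E2 n) : ℝ := sSup (scdregSet F z)

/-- The graph of the outer limiting graphical derivative `D^♯F(x̄,ȳ)`. -/
def DsharpG (F : E n → Set (E n)) (z : E2 n) : Set (E2 n) :=
  {w | ∃ (zk : ℕ → E2 n) (wk : ℕ → E2 n),
    (∀ k, zk k ∈ gph F ∧ wk k ∈ tcone (gph F) (zk k)) ∧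
    Tendsto zk atTop (𝓝 z) ∧ Tendsto wk atTop (𝓝 w)}

/-- The regular (Fréchet) normal cone: the polar of the tangent cone. -/
def regN (A : Set (E2 n)) (z : E2 n) : Set (E2 n) := {w | ∀ v ∈ tcone A z, ⟪w, v⟫_ℝ ≤ 0}

/-- The limiting (Mordukhovich) normal cone. -/
def limN (A : Set (E2 n)) (z : E2 n) : Set (E2 n) :=
  {w | ∃ (zk wk : ℕ → E2 n), (∀ k, zk k ∈ A ∧ wk k ∈ regN A (zk k)) ∧
    Tendsto zk atTop (𝓝 z) ∧ Tendsto wk atTop (𝓝 w)}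

/-- The graph of the limiting coderivative: `(y*, x*)` with `(x*, -y*)` in the limiting
normal cone to the graph. -/
def coderivG (F : E n → Set (E n)) (z : E2 n) : Set (E2 n) :=
  {w | mk2 (snd2 w) (-(fst2 w)) ∈ limN (gph F) z}

/-- The graph of the strict (paratingent) derivative `D_*F(x̄,ȳ)`. -/
def paraconeG (F : E n → Set (E n)) (z : E2 n) : Set (E2 n) :=
  {w | ∃ (t : ℕ → ℝ) (z1 z2 : ℕ → E2 n), (∀ k, 0 < t k) ∧ Tendsto t atTop (𝓝 0) ∧
    (∀ k, z1 k ∈ gph F ∧ z2 k ∈ gph F) ∧ Tendsto z1 atTop (𝓝 z) ∧ Tendsto z2 atTop (𝓝 z) ∧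
    Tendsto (fun k => (t k)⁻¹ • (z2 k - z1 k)) atTop (𝓝 w)}

/-- The B-subdifferential of `f : U → ℝ^n` at `x`. -/
def Bsub (f : E n → E n) (U : Set (E n)) (x : E n) : Set (E n →L[ℝ] E n) :=
  {A | ∃ xk : ℕ → E n, (∀ k, xk k ∈ U ∧ DifferentiableAt ℝ f (xk k)) ∧
    Tendsto xk atTop (𝓝 x) ∧ Tendsto (fun k => fderiv ℝ f (xk k)) atTop (𝓝 A)}

/-- A single-valued map `f` on `U` viewed as a set-valued map. -/
def sv (f : E n → E n) (U : Set (E n)) : E n → Set (E n) := fun x => {y | x ∈ U ∧ y = f x}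

/-- The linear map `u ↦ (u, A u)`. -/
def graphMap (A : E n →L[ℝ] E n) : E n →ₗ[ℝ] E2 n :=
  (lp2 n).symm.toLinearMap.comp (LinearMap.prod LinearMap.id A.toLinearMap)

/-- The subspace `rge(I, A) = {(u, Au) : u ∈ ℝ^n}`. -/
def rgeIA (A : E n →L[ℝ] E n) : Submodule ℝ (E2 n) := LinearMap.range (graphMap A)

/-- The linear map `p ↦ (C p, p)`. -/
def graphMapRev (C : E n →L[ℝ] E n) : E n →ₗ[ℝ] E2 n :=
  (lp2 n).symm.toLinearMap.comp (LinearMap.prod C.toLinearMap LinearMap.id)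

/-- The subspace `rge(C, I) = {(C p, p) : p ∈ ℝ^n}`. -/
def rgeCI (C : E n →L[ℝ] E n) : Submodule ℝ (E2 n) := LinearMap.range (graphMapRev C)

/-- The preimage map `F^{-1}(y)`. -/
def Finv (F : E n → Set (E n)) (y : E n) : Set (E n) := {x | y ∈ F x}

/-- Metric subregularity at `z ∈ gph F` with constant `κ`. -/
def SubregWith (F : E n → Set (E n)) (z : E2 n) (κ : ℝ) : Prop :=
  ∃ δ > (0 : ℝ), ∀ x' : E n, dist x' (fst2 z) < δ →
    EMetric.infEdist x' (Finv F (snd2 z)) ≤ ENNReal.ofReal κ * EMetric.infEdist (snd2 z) (F x')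

/-- `F` is metrically subregular at `z ∈ gph F`. -/
def SubregAt (F : E n → Set (E n)) (z : E2 n) : Prop := ∃ κ, 0 ≤ κ ∧ SubregWith F z κ

/-- The modulus of metric subregularity `subreg F(x,y)`. -/
def subregMod (F : E n → Set (E n)) (z : E2 n) : ℝ := sInf {κ | 0 ≤ κ ∧ SubregWith F z κ}

/-- `F` is strongly metrically subregular at `z ∈ gph F`. -/
def StrSubregAt (F : E n → Set (E n)) (z : E2 n) : Prop :=
  SubregAt F z ∧ ∃ δ > (0 : ℝ), ∀ x' ∈ Finv F (snd2 z), dist x' (fst2 z) < δ → x' = fst2 z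

/-- `F` is strongly metrically subregular around `zb ∈ gph F` (with finite `lsubreg`). -/
def StrSubregAround (F : E n → Set (E n)) (zb : E2 n) : Prop :=
  ∃ δ > (0 : ℝ), (∀ z ∈ gph F, dist z zb < δ → StrSubregAt F z) ∧
    ∃ c : ℝ, ∀ z ∈ gph F, dist z zb < δ → subregMod F z ≤ c

/-- `lsubreg F(x̄,ȳ)`: the limsup of `subreg F(x,y)` over graph points `(x,y) → (x̄,ȳ)`. -/
def lsubreg (F : E n → Set (E n)) (zb : E2 n) : ℝ :=
  Filter.limsup (fun z => subregMod F z) (𝓝[gph F] zb)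

/-- Metric regularity around `zb ∈ gph F` with constant `κ`. -/
def RegWith (F : E n → Set (E n)) (zb : E2 n) (κ : ℝ) : Prop :=
  ∃ δ > (0 : ℝ), ∀ x y : E n, dist x (fst2 zb) < δ → dist y (snd2 zb) < δ →
    EMetric.infEdist x (Finv F y) ≤ ENNReal.ofReal κ * EMetric.infEdist y (F x)

/-- `F` is metrically regular around `zb ∈ gph F`. -/
def MetrRegAround (F : E n → Set (E n)) (zb : E2 n) : Prop := ∃ κ, 0 ≤ κ ∧ RegWith F zb κ

/-- The modulus of metric regularity `reg F(x̄,ȳ)`. -/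
def regMod (F : E n → Set (E n)) (zb : E2 n) : ℝ := sInf {κ | 0 ≤ κ ∧ RegWith F zb κ}

/-- `F` is strongly metrically regular around `zb ∈ gph F`: metrically regular and `F⁻¹`
has a single-valued localization around `(ȳ, x̄)`. -/
def StrRegAround (F : E n → Set (E n)) (zb : E2 n) : Prop :=
  MetrRegAround F zb ∧
  ∃ (X' Y' : Set (E n)) (h : E n → E n), IsOpen X' ∧ IsOpen Y' ∧
    fst2 zb ∈ X' ∧ snd2 zb ∈ Y' ∧ h (snd2 zb) = fst2 zb ∧
    gph F ∩ {w | fst2 w ∈ X' ∧ snd2 w ∈ Y'} = {w | snd2 w ∈ Y' ∧ fst2 w = h (snd2 w)}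

/-- `F` is SCD semismooth* at `zb ∈ gph F`. -/
def SCDSemismoothAt (F : E n → Set (E n)) (zb : E2 n) : Prop :=
  SCDAround F zb ∧ ∀ ε > (0 : ℝ), ∃ δ > (0 : ℝ), ∀ z ∈ gph F, dist z zb ≤ δ →
    ∀ L ∈ SpStar F z, ∀ w : E2 n, w ∈ L →
      |⟪snd2 w, fst2 z - fst2 zb⟫_ℝ - ⟪fst2 w, snd2 z - snd2 zb⟫_ℝ| ≤ ε * ‖z - zb‖ * ‖w‖

/-- `F` is graphically Lipschitzian of dimension `n` at `zb` with transformation mapping `Φ`,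
local inverse `Ψ`, neighborhood `W`, and `K`-Lipschitz map `f : U → ℝ^n`. -/
def GraphLipWith (F : E n → Set (E n)) (zb : E2 n) (Φ Ψ : E2 n → E2 n)
    (W : Set (E2 n)) (U : Set (E n)) (f : E n → E n) (K : ℝ≥0) : Prop :=
  IsOpen W ∧ zb ∈ W ∧ ContDiffOn ℝ 1 Φ W ∧ Set.InjOn Φ W ∧ IsOpen (Φ '' W) ∧
  ContDiffOn ℝ 1 Ψ (Φ '' W) ∧ Set.LeftInvOn Ψ Φ W ∧
  IsOpen U ∧ LipschitzOnWith K f U ∧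
  Φ '' (gph F ∩ W) = {w | fst2 w ∈ U ∧ snd2 w = f (fst2 w)}

/-- `F` is graphically Lipschitzian of dimension `n` at `zb` with transformation mapping `Φ`. -/
def GraphLipAt (F : E n → Set (E n)) (zb : E2 n) (Φ : E2 n → E2 n) : Prop :=
  ∃ Ψ W U f K, GraphLipWith F zb Φ Ψ W U f K

/-- `∇̄^Φ F(x̄,ȳ)`: the `(2n)×n` matrices `Z` (as linear maps `ℝ^n → ℝ^{2n}`) with
`rge Z ∈ Sp F(x̄,ȳ)` and upper block of `∇Φ(x̄,ȳ)Z` equal to the identity. -/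
def BsubPhi (F : E n → Set (E n)) (zb : E2 n) (Φ : E2 n → E2 n) : Set (E n →L[ℝ] E2 n) :=
  {Z | LinearMap.range (Z : E n →ₗ[ℝ] E2 n) ∈ Sp F zb ∧ ∀ p, fst2 (fderiv ℝ Φ zb (Z p)) = p}

/-- A (globally) monotone set-valued map. -/
def MonoMap (T : E n → Set (E n)) : Prop :=
  ∀ x₁ y₁ x₂ y₂, y₁ ∈ T x₁ → y₂ ∈ T x₂ → 0 ≤ ⟪y₁ - y₂, x₁ - x₂⟫_ℝ

/-- `F` is locally maximally monotone at `z ∈ gph F`. -/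
def LocMaxMonoAt (F : E n → Set (E n)) (z : E2 n) : Prop :=
  ∃ X Y : Set (E n), IsOpen X ∧ IsOpen Y ∧ fst2 z ∈ X ∧ snd2 z ∈ Y ∧
    (∀ w₁ ∈ gph F ∩ {w | fst2 w ∈ X ∧ snd2 w ∈ Y},
     ∀ w₂ ∈ gph F ∩ {w | fst2 w ∈ X ∧ snd2 w ∈ Y},
       0 ≤ ⟪snd2 w₁ - snd2 w₂, fst2 w₁ - fst2 w₂⟫_ℝ) ∧
    ∀ T : E n → Set (E n), MonoMap T →
      gph F ∩ {w | fst2 w ∈ X ∧ snd2 w ∈ Y} ⊆ gph T →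
      gph F ∩ {w | fst2 w ∈ X ∧ snd2 w ∈ Y} = gph T ∩ {w | fst2 w ∈ X ∧ snd2 w ∈ Y}

/-- `F` is locally maximally hypomonotone at `z ∈ gph F`:
`γI + F` is locally maximally monotone at `(x, γx + y)` for some `γ ≥ 0`. -/
def LocMaxHypoAt (F : E n → Set (E n)) (z : E2 n) : Prop :=
  ∃ γ : ℝ, 0 ≤ γ ∧ LocMaxMonoAt (fun x => (fun y => γ • x + y) '' F x)
    (mk2 (fst2 z) (γ • fst2 z + snd2 z))

/-- A firmly nonexpansive matrix: `⟨Bv, v⟩ ≥ ‖Bv‖²` for all `v`. -/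
def FirmNonexp (B : E n →L[ℝ] E n) : Prop := ∀ v, ‖B v‖ ^ 2 ≤ ⟪B v, v⟫_ℝ

/-!
Calmness bounds every tangent vector `(u, v)` to the graph by `‖v‖ ≤ κ‖u‖`, so the
`n`-dimensional subspace `L` of tangent vectors meets `{0} × ℝⁿ` trivially and is the graph of a
linear map `A`. If `A` were not the derivative, some `xₖ → x` would have
`‖f xₖ - f x - A (xₖ - x)‖ ≥ ε ‖xₖ - x‖`; calmness keeps the difference quotients of the graph
along `xₖ` bounded, so a subsequence converges to a tangent vector `(u, v)` with `‖v - A u‖ ≥ ε`,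
contradicting `(u, v) ∈ L`.
-/

@[simp] lemma fst2_eq_fst (z : E2 n) : fst2 z = z.fst := rfl

@[simp] lemma snd2_eq_snd (z : E2 n) : snd2 z = z.snd := rfl

@[simp] lemma mk2_eq_toLp (u v : E n) : mk2 u v = WithLp.toLp 2 (u, v) := rfl

lemma norm_le_norm_fst_add_norm_snd (w : E2 n) : ‖w‖ ≤ ‖w.fst‖ + ‖w.snd‖ := by
  rw [WithLp.prod_norm_eq_of_L2]
  exact Real.sqrt_le_iff.mpr ⟨by positivity, by nlinarith [norm_nonneg w.fst, norm_nonneg w.snd]⟩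

lemma mem_tcone_of_tendsto_smul_sub {H : Type*} [NormedAddCommGroup H] [NormedSpace ℝ H]
    {A : Set H} {z₀ w : H} {z : ℕ → H} {t : ℕ → ℝ} (hz : ∀ k, z k ∈ A) (ht : ∀ k, 0 < t k)
    (ht₀ : Tendsto t atTop (𝓝 0)) (hw : Tendsto (fun k => (t k)⁻¹ • (z k - z₀)) atTop (𝓝 w)) :
    w ∈ tcone A z₀ :=
  ⟨t, _, ht, ht₀, hw, fun k => by simpa [smul_inv_smul₀ (ht k).ne'] using hz k⟩

theorem exists_linearMap_of_finrank_eq {𝕜 V W : Type*} [Field 𝕜] [AddCommGroup V] [Module 𝕜 V]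
    [FiniteDimensional 𝕜 V] [AddCommGroup W] [Module 𝕜 W] {p : ℝ≥0∞}
    (L : Submodule 𝕜 (WithLp p (V × W))) (hdim : Module.finrank 𝕜 L = Module.finrank 𝕜 V)
    (hL : ∀ w ∈ L, w.fst = 0 → w.snd = 0) : ∃ A : V →ₗ[𝕜] W, ∀ w ∈ L, w.snd = A w.fst := by
  let π : L →ₗ[𝕜] V := (WithLp.fstₗ p 𝕜 V W).comp L.subtype
  have hπ : Function.Injective π := by
    refine (injective_iff_map_eq_zero π).mpr fun w hw => ?_
    have hsnd := hL w w.2 hw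
    exact Subtype.ext (WithLp.ofLp_injective p (Prod.ext hw hsnd))
  have : FiniteDimensional 𝕜 L := Module.Finite.of_injective π hπ
  let e : L ≃ₗ[𝕜] V := LinearMap.linearEquivOfInjective π hπ hdim
  refine ⟨(WithLp.sndₗ p 𝕜 V W).comp (L.subtype.comp e.symm.toLinearMap), fun w hw => ?_⟩
  have he : e.symm w.fst = ⟨w, hw⟩ := e.symm_apply_eq.mpr rfl
  simp [he]

section CalmGraph

variable {f : E n → E n} {U : Set (E n)} {x : E n} {κ : ℝ}

lemma norm_snd_le_of_mem_tcone_gph_sv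
    (hcalm : ∀ᶠ x' in 𝓝 x, ‖f x' - f x‖ ≤ κ * ‖x' - x‖) {w : E2 n}
    (hw : w ∈ tcone (gph (sv f U)) (mk2 x (f x))) : ‖w.snd‖ ≤ κ * ‖w.fst‖ := by
  obtain ⟨t, wk, ht, ht₀, hwk, hmem⟩ := hw
  have hfst := ((WithLp.continuous_fst 2 _ _).tendsto w).comp hwk
  have hsnd := ((WithLp.continuous_snd 2 _ _).tendsto w).comp hwk
  have hnear : Tendsto (fun k => x + t k • (wk k).fst) atTop (𝓝 x) := by
    simpa using tendsto_const_nhds.add (ht₀.smul hfst)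
  have hev : ∀ᶠ k in atTop, ‖(wk k).snd‖ ≤ κ * ‖(wk k).fst‖ := by
    filter_upwards [hnear.eventually hcalm] with k hk
    have hfk : f x + t k • (wk k).snd = f (x + t k • (wk k).fst) := by simpa using (hmem k).2
    rw [← hfk, add_sub_cancel_left, add_sub_cancel_left, norm_smul, norm_smul,
      Real.norm_of_nonneg (ht k).le, mul_left_comm] at hk
    exact le_of_mul_le_mul_left hk (ht k)
  exact le_of_tendsto_of_tendsto hsnd.norm (hfst.norm.const_mul κ) hev

def graphQuot (f : E n → E n) (x x' : E n) : E2 n := ‖x' - x‖⁻¹ • (mk2 x' (f x') - mk2 x (f x))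

lemma exists_subseq_graphQuot_tendsto_mem_tcone {xk : ℕ → E n} (hxk : Tendsto xk atTop (𝓝 x))
    (hne : ∀ k, xk k ≠ x) (hxkU : ∀ k, xk k ∈ U)
    (hxkcalm : ∀ k, ‖f (xk k) - f x‖ ≤ κ * ‖xk k - x‖) :
    ∃ w₀ ∈ tcone (gph (sv f U)) (mk2 x (f x)), ∃ φ : ℕ → ℕ, StrictMono φ ∧
      Tendsto (fun k => graphQuot f x (xk (φ k))) atTop (𝓝 w₀) := by
  have ht : ∀ k, 0 < ‖xk k - x‖ := fun k => norm_pos_iff.mpr (sub_ne_zero.mpr (hne k))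
  have hbdd : ∀ k, graphQuot f x (xk k) ∈ closedBall 0 (1 + κ) := fun k => by
    have hfst : ‖(graphQuot f x (xk k)).fst‖ = 1 := by
      simp [graphQuot, norm_smul, inv_mul_cancel₀ (ht k).ne']
    have hsnd : ‖(graphQuot f x (xk k)).snd‖ ≤ κ := by
      simpa [graphQuot, norm_smul, inv_mul_le_iff₀ (ht k), mul_comm] using hxkcalm k
    simpa using (norm_le_norm_fst_add_norm_snd _).trans (by linarith)
  obtain ⟨w₀, -, φ, hφ, hlim⟩ := tendsto_subseq_of_bounded isBounded_closedBall hbdd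
  refine ⟨w₀, mem_tcone_of_tendsto_smul_sub (fun k => ⟨by simpa using hxkU (φ k), by simp⟩)
    (fun k => ht (φ k)) ?_ hlim, φ, hφ, hlim⟩
  simpa using ((hxk.comp hφ.tendsto_atTop).sub_const x).norm

theorem hasFDerivAt_of_tcone_gph_sv_subset (hU : U ∈ 𝓝 x)
    (hcalm : ∀ᶠ x' in 𝓝 x, ‖f x' - f x‖ ≤ κ * ‖x' - x‖) {A : E n →L[ℝ] E n}
    (hA : ∀ w ∈ tcone (gph (sv f U)) (mk2 x (f x)), w.snd = A w.fst) : HasFDerivAt f A x := by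
  rw [hasFDerivAt_iff_tendsto]
  by_contra hnot
  obtain ⟨ε, hε, hfreq⟩ : ∃ ε > 0, ∃ᶠ x' in 𝓝 x, ε ≤ ‖x' - x‖⁻¹ * ‖f x' - f x - A (x' - x)‖ := by
    simpa [Metric.tendsto_nhds, abs_of_nonneg] using hnot
  obtain ⟨xk, hxk, hP⟩ := exists_seq_forall_of_frequently
    (hfreq.and_eventually (Filter.inter_mem hU hcalm))
  choose hgap hxkU hxkcalm using hP
  have hne : ∀ k, xk k ≠ x := fun k h0 => by
    simpa [h0, hε.not_ge] using hgap k
  have hgap' : ∀ k, ε ≤ ‖(graphQuot f x (xk k)).snd - A (graphQuot f x (xk k)).fst‖ :=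
    fun k => by simpa [graphQuot, ← smul_sub, norm_smul] using hgap k
  obtain ⟨w₀, hw₀, φ, -, hlim⟩ := exists_subseq_graphQuot_tendsto_mem_tcone hxk hne hxkU hxkcalm
  have hcont : Continuous fun v : E2 n => ‖v.snd - A v.fst‖ := by fun_prop
  have : ε ≤ ‖w₀.snd - A w₀.fst‖ :=
    ge_of_tendsto ((hcont.tendsto w₀).comp hlim) (Eventually.of_forall fun k => hgap' (φ k))
  rw [hA w₀ hw₀, sub_self, norm_zero] at this
  exact hε.not_ge this

end CalmGraph

theorem stmt3_general (n : ℕ) (U : Set (E n)) (hU : IsOpen U) (f : E n → E n) (x : E n) (hx : x ∈ U)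
    (L : Submodule ℝ (E2 n)) (hdim : Module.finrank ℝ L = n)
    (htan : (L : Set (E2 n)) = tcone (gph (sv f U)) (mk2 x (f x)))
    (κ : ℝ) (δ : ℝ) (hδ : 0 < δ)
    (hcalm : ∀ x' ∈ U, ‖x' - x‖ ≤ δ → ‖f x' - f x‖ ≤ κ * ‖x' - x‖) :
    DifferentiableAt ℝ f x := by
  have hcalm' : ∀ᶠ x' in 𝓝 x, ‖f x' - f x‖ ≤ κ * ‖x' - x‖ := by
    filter_upwards [hU.mem_nhds hx, closedBall_mem_nhds x hδ] with x' hx'U hx'δ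
    exact hcalm x' hx'U (mem_closedBall_iff_norm.mp hx'δ)
  have hmemL : ∀ w, w ∈ L ↔ w ∈ tcone (gph (sv f U)) (mk2 x (f x)) := Set.ext_iff.mp htan
  obtain ⟨A, hA⟩ := exists_linearMap_of_finrank_eq L (by simp [hdim]) fun w hw hw₀ => by
    simpa [hw₀] using norm_snd_le_of_mem_tcone_gph_sv hcalm' ((hmemL w).mp hw)
  have hgraph : ∀ w ∈ tcone (gph (sv f U)) (mk2 x (f x)),
      w.snd = LinearMap.toContinuousLinearMap A w.fst := fun w hw => hA w ((hmemL w).mpr hw)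
  exact (hasFDerivAt_of_tcone_gph_sv_subset (hU.mem_nhds hx) hcalm' hgraph).differentiableAt

theorem stmt3 (n : ℕ) (U : Set (E n)) (hU : IsOpen U) (f : E n → E n) (x : E n) (hx : x ∈ U)
    (L : Submodule ℝ (E2 n)) (hdim : Module.finrank ℝ L = n)
    (htan : (L : Set (E2 n)) = tcone (gph (sv f U)) (mk2 x (f x)))
    (κ : ℝ) (hκ : 0 ≤ κ) (δ : ℝ) (hδ : 0 < δ)
    (hcalm : ∀ x' ∈ U, ‖x' - x‖ ≤ δ → ‖f x' - f x‖ ≤ κ * ‖x' - x‖) :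
    DifferentiableAt ℝ f x :=
  stmt3_general n U hU f x hx L hdim htan κ δ hδ hcalm

end SCD
end
end

section
/- Let F : ℝ^n ⇒ ℝ^n and let (x, y) ∈ gph F. Then L ∈ Sp F(x, y) if and only if there exist sequences (u_k, v_k) ∈ gph F with (u_k, v_k) → (x, y) and L_k ∈ Sp F(u_k, v_k) with d_Z(L_k, L) → 0; the analogous equivalence holds with Sp replaced by Sp*. In other words, Sp F(x, y) and Sp* F(x, y) equal their own sequential outer limits over graph points converging to (x, y). -/
open Filter Topology Metric Set
open scoped InnerProductSpace RealInnerProductSpace ENNReal NNReal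

noncomputable section

namespace SCD

variable {n : ℕ}

/-! Identify a subspace `L` with its orthogonal projection `P_L`; then `d_Z` is the operator-norm
distance, and `Sp F z` consists of the `n`-dimensional `L` with `(z, P_L)` in the closure of
`{(w, P_{T(w)}) : w ∈ O_F}` in `ℝ^{2n} × End(ℝ^{2n})`. A closure is closed, which is the first
equivalence. The map `L ↦ L*` is the orthogonal complement followed by the rotation
`(u, v) ↦ (-v, u)`; both are `d_Z`-isometries, and `L ↦ L*` is an involution, so it carries the
first equivalence over to `Sp*`. -/

def seqOuterLimit (F : E n → Set (E n)) (S : E2 n → Set (Submodule ℝ (E2 n))) (z : E2 n) :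
    Set (Submodule ℝ (E2 n)) :=
  {L | Module.finrank ℝ L = n ∧ ∃ (zk : ℕ → E2 n) (Lk : ℕ → Submodule ℝ (E2 n)),
    (∀ k, zk k ∈ gph F ∧ Lk k ∈ S (zk k)) ∧ Tendsto zk atTop (𝓝 z) ∧
    Tendsto (fun k => dZ (Lk k) L) atTop (𝓝 0)}

lemma tendsto_dZ_iff_tendsto_projC {ι : Type*} {l : Filter ι} {Lk : ι → Submodule ℝ (E2 n)}
    {L : Submodule ℝ (E2 n)} :
    Tendsto (fun k => dZ (Lk k) L) l (𝓝 0) ↔ Tendsto (fun k => projC (Lk k)) l (𝓝 (projC L)) :=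
  tendsto_iff_norm_sub_tendsto_zero.symm

def tangentProjections (F : E n → Set (E n)) : Set (E2 n × (E2 n →L[ℝ] E2 n)) :=
  {p | ∃ L : Submodule ℝ (E2 n), p.2 = projC L ∧ p.1 ∈ gph F ∧
    Module.finrank ℝ L = n ∧ (L : Set (E2 n)) = tcone (gph F) p.1}

lemma mem_Sp_iff_mem_closure {F : E n → Set (E n)} {z : E2 n} {L : Submodule ℝ (E2 n)} :
    L ∈ Sp F z ↔ Module.finrank ℝ L = n ∧ (z, projC L) ∈ closure (tangentProjections F) := by
  rw [mem_closure_iff_seq_limit]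
  constructor
  · rintro ⟨hL, zk, Lk, hk, hz, hd⟩
    exact ⟨hL, fun k => (zk k, projC (Lk k)), fun k => ⟨Lk k, rfl, hk k⟩,
      hz.prodMk_nhds (tendsto_dZ_iff_tendsto_projC.mp hd)⟩
  · rintro ⟨hL, p, hp, hlim⟩
    choose Lk hproj hk using hp
    refine ⟨hL, fun k => (p k).1, Lk, hk, hlim.fst_nhds, tendsto_dZ_iff_tendsto_projC.mpr ?_⟩
    simpa only [← hproj] using hlim.snd_nhds

lemma mem_Sp_of_tcone_eq {F : E n → Set (E n)} {z : E2 n} {L : Submodule ℝ (E2 n)}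
    (hz : z ∈ gph F) (hL : Module.finrank ℝ L = n) (ht : (L : Set (E2 n)) = tcone (gph F) z) :
    L ∈ Sp F z :=
  mem_Sp_iff_mem_closure.mpr ⟨hL, subset_closure ⟨L, rfl, hz, hL, ht⟩⟩

theorem Sp_eq_seqOuterLimit (F : E n → Set (E n)) (z : E2 n) :
    Sp F z = seqOuterLimit F (Sp F) z := by
  ext L
  constructor
  · rintro ⟨hL, zk, Lk, hk, hz, hd⟩
    exact ⟨hL, zk, Lk, fun k => ⟨(hk k).1, mem_Sp_of_tcone_eq (hk k).1 (hk k).2.1 (hk k).2.2⟩,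
      hz, hd⟩
  · rintro ⟨hL, zk, Lk, hk, hz, hd⟩
    refine mem_Sp_iff_mem_closure.mpr ⟨hL, ?_⟩
    rw [← closure_closure]
    exact mem_closure_of_tendsto (hz.prodMk_nhds (tendsto_dZ_iff_tendsto_projC.mp hd))
      (Eventually.of_forall fun k => (mem_Sp_iff_mem_closure.mp (hk k).2).2)

lemma projC_eq_starProjection (L : Submodule ℝ (E2 n)) : projC L = L.starProjection := rfl

lemma dZ_orthogonal (L₁ L₂ : Submodule ℝ (E2 n)) : dZ L₁ᗮ L₂ᗮ = dZ L₁ L₂ := by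
  simp only [dZ, projC_eq_starProjection, Submodule.starProjection_orthogonal,
    sub_sub_sub_cancel_left]
  exact norm_sub_rev _ _

lemma dZ_map (e : E2 n ≃ₗᵢ[ℝ] E2 n) (L₁ L₂ : Submodule ℝ (E2 n)) :
    dZ (L₁.map (e.toLinearEquiv : E2 n →ₗ[ℝ] E2 n)) (L₂.map (e.toLinearEquiv : E2 n →ₗ[ℝ] E2 n))
      = dZ L₁ L₂ := by
  have hcomp : projC (L₁.map (e.toLinearEquiv : E2 n →ₗ[ℝ] E2 n)) -
      projC (L₂.map (e.toLinearEquiv : E2 n →ₗ[ℝ] E2 n)) =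
      (e : E2 n →L[ℝ] E2 n).comp ((projC L₁ - projC L₂).comp (e.symm : E2 n →L[ℝ] E2 n)) := by
    ext x
    simp [projC_eq_starProjection, Submodule.starProjection_map_apply]
  rw [dZ, hcomp, ContinuousLinearMap.opNorm_linearIsometryEquiv_comp,
    ContinuousLinearMap.opNorm_comp_linearIsometryEquiv, dZ]

def negIso (n : ℕ) : E2 n ≃ₗᵢ[ℝ] E2 n :=
  (Sneg n).isometryOfInner fun x y => by
    show ⟪-(x.snd), -(y.snd)⟫_ℝ + ⟪x.fst, y.fst⟫_ℝ = _
    rw [inner_neg_neg, WithLp.prod_inner_apply]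
    exact add_comm _ _

lemma adjS_eq_map_negIso (L : Submodule ℝ (E2 n)) :
    adjS L = Lᗮ.map ((negIso n).toLinearEquiv : E2 n →ₗ[ℝ] E2 n) := rfl

lemma negIso_negIso (x : E2 n) : negIso n (negIso n x) = -x := rfl

lemma adjS_adjS (L : Submodule ℝ (E2 n)) : adjS (adjS L) = L := by
  have hsq : ((negIso n).toLinearEquiv : E2 n →ₗ[ℝ] E2 n) ∘ₗ (negIso n).toLinearEquiv =
      -LinearMap.id :=
    LinearMap.ext negIso_negIso
  rw [adjS_eq_map_negIso, adjS_eq_map_negIso, ← Submodule.map_orthogonal_equiv,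
    Submodule.orthogonal_orthogonal, ← Submodule.map_comp, hsq, Submodule.map_neg,
    Submodule.map_id]

lemma dZ_adjS (L₁ L₂ : Submodule ℝ (E2 n)) : dZ (adjS L₁) (adjS L₂) = dZ L₁ L₂ := by
  rw [adjS_eq_map_negIso, adjS_eq_map_negIso, dZ_map, dZ_orthogonal]

lemma finrank_adjS {L : Submodule ℝ (E2 n)} (hL : Module.finrank ℝ L = n) :
    Module.finrank ℝ (adjS L) = n := by
  have hsum := Submodule.finrank_add_finrank_orthogonal (𝕜 := ℝ) L
  rw [hL, (lp2 n).finrank_eq, Module.finrank_prod, finrank_euclideanSpace_fin] at hsum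
  rw [adjS, LinearEquiv.finrank_map_eq]
  omega

lemma mem_SpStar_iff {F : E n → Set (E n)} {z : E2 n} {L : Submodule ℝ (E2 n)} :
    L ∈ SpStar F z ↔ adjS L ∈ Sp F z :=
  ⟨by rintro ⟨M, hM, rfl⟩; rwa [adjS_adjS], fun h => ⟨adjS L, h, (adjS_adjS L).symm⟩⟩

lemma adjS_mem_seqOuterLimit_Sp_iff {F : E n → Set (E n)} {z : E2 n} {L : Submodule ℝ (E2 n)} :
    adjS L ∈ seqOuterLimit F (Sp F) z ↔ L ∈ seqOuterLimit F (SpStar F) z := by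
  constructor
  · rintro ⟨hL, zk, Mk, hk, hz, hd⟩
    refine ⟨adjS_adjS L ▸ finrank_adjS hL, zk, fun k => adjS (Mk k),
      fun k => ⟨(hk k).1, mem_SpStar_iff.mpr ((adjS_adjS (Mk k)).symm ▸ (hk k).2)⟩, hz, ?_⟩
    simpa only [← dZ_adjS (Mk _), adjS_adjS] using hd
  · rintro ⟨hL, zk, Lk, hk, hz, hd⟩
    exact ⟨finrank_adjS hL, zk, fun k => adjS (Lk k),
      fun k => ⟨(hk k).1, mem_SpStar_iff.mp (hk k).2⟩, hz, by simpa only [dZ_adjS] using hd⟩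

theorem SpStar_eq_seqOuterLimit (F : E n → Set (E n)) (z : E2 n) :
    SpStar F z = seqOuterLimit F (SpStar F) z := by
  ext L
  rw [mem_SpStar_iff, Sp_eq_seqOuterLimit, adjS_mem_seqOuterLimit_Sp_iff]

theorem stmt7_general (n : ℕ) (F : E n → Set (E n)) (z : E2 n) :
    (∀ L : Submodule ℝ (E2 n), L ∈ Sp F z ↔
      (Module.finrank ℝ L = n ∧ ∃ (zk : ℕ → E2 n) (Lk : ℕ → Submodule ℝ (E2 n)),
        (∀ k, zk k ∈ gph F ∧ Lk k ∈ Sp F (zk k)) ∧ Tendsto zk atTop (𝓝 z) ∧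
        Tendsto (fun k => dZ (Lk k) L) atTop (𝓝 0))) ∧
    (∀ L : Submodule ℝ (E2 n), L ∈ SpStar F z ↔
      (Module.finrank ℝ L = n ∧ ∃ (zk : ℕ → E2 n) (Lk : ℕ → Submodule ℝ (E2 n)),
        (∀ k, zk k ∈ gph F ∧ Lk k ∈ SpStar F (zk k)) ∧ Tendsto zk atTop (𝓝 z) ∧
        Tendsto (fun k => dZ (Lk k) L) atTop (𝓝 0))) :=
  ⟨Set.ext_iff.mp (Sp_eq_seqOuterLimit F z), Set.ext_iff.mp (SpStar_eq_seqOuterLimit F z)⟩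

theorem stmt7 (n : ℕ) (F : E n → Set (E n)) (z : E2 n) (hz : z ∈ gph F) :
    (∀ L : Submodule ℝ (E2 n), L ∈ Sp F z ↔
      (Module.finrank ℝ L = n ∧ ∃ (zk : ℕ → E2 n) (Lk : ℕ → Submodule ℝ (E2 n)),
        (∀ k, zk k ∈ gph F ∧ Lk k ∈ Sp F (zk k)) ∧ Tendsto zk atTop (𝓝 z) ∧
        Tendsto (fun k => dZ (Lk k) L) atTop (𝓝 0))) ∧
    (∀ L : Submodule ℝ (E2 n), L ∈ SpStar F z ↔
      (Module.finrank ℝ L = n ∧ ∃ (zk : ℕ → E2 n) (Lk : ℕ → Submodule ℝ (E2 n)),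
        (∀ k, zk k ∈ gph F ∧ Lk k ∈ SpStar F (zk k)) ∧ Tendsto zk atTop (𝓝 z) ∧
        Tendsto (fun k => dZ (Lk k) L) atTop (𝓝 0))) :=
  stmt7_general n F z

end SCD
end
end
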